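/- Under the logit update z'_v = z_v + ηA(𝟙[v=y] − p_v) applied to a softmax policy, the entropy of the updated distribution satisfies H(softmax(z')) = H(softmax(z)) + ηA(−t1 + t2) + O(η²) as η → 0, where t1 = p_y(H(p) + log p_y) and t2 = ∑_v p_v²(H(p) + log p_v). -/

import Mathlib

noncomputable def softmax {V : Type*} [Fintype V] [DecidableEq V] (z : V → ℝ) (v : V) : ℝ :=
  Real.exp (z v) / ∑ u, Real.exp (z u)

noncomputable def entropy {V : Type*} [Fintype V] (p : V → ℝ) : ℝ :=
  -∑ v, p v * Real.log (p v)

noncomputable def t1 {V : Type*} [Fintype V] (p : V → ℝ) (y : V) : ℝ :=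
  p y * (entropy p + Real.log (p y))

noncomputable def t2 {V : Type*} [Fintype V] (p : V → ℝ) : ℝ :=
  ∑ v, (p v) ^ 2 * (entropy p + Real.log (p v))

/-! Along the line `η ↦ z + η c` the entropy of the softmax is smooth, so Taylor's theorem bounds
the remainder by `C η²`. Since the derivative `p_v (c_v - ∑ p_u c_u)` of the softmax sums to zero,
the first-order coefficient is `-∑ p_v c_v (H(p) + log p_v)`, which for the policy-gradient
direction `c_v = A (𝟙[v = y] - p_v)` equals `A (t2 - t1)`. -/

open Finset Real

theorem ContDiff.exists_abs_sub_sub_mul_le_sq {f : ℝ → ℝ} (hf : ContDiff ℝ 2 f) {f' : ℝ}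
    (hf' : HasDerivAt f f' 0) :
    ∃ C > (0:ℝ), ∃ η₀ > (0:ℝ), ∀ η : ℝ, 0 < η → η < η₀ → |f η - f 0 - η * f'| ≤ C * η ^ 2 := by
  have hf₂ : ContDiffOn ℝ (1 + 1 : ℕ) f (Set.Icc 0 1) := hf.contDiffOn
  obtain ⟨C, hC⟩ := exists_taylor_mean_remainder_bound zero_le_one hf₂
  have hderiv : derivWithin f (Set.Icc 0 1) 0 = f' :=
    hf'.hasDerivWithinAt.derivWithin (uniqueDiffOn_Icc one_pos 0 ⟨le_rfl, zero_le_one⟩)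
  refine ⟨max C 1, by positivity, 1, one_pos, fun η hη hη₁ => ?_⟩
  have hbound := hC η ⟨hη.le, hη₁.le⟩
  simp only [taylor_within_apply, Finset.sum_range_succ, Finset.sum_range_zero,
    iteratedDerivWithin_one, hderiv] at hbound
  calc |f η - f 0 - η * f'| ≤ C * η ^ 2 := by simpa [sub_sub] using hbound
    _ ≤ max C 1 * η ^ 2 := by gcongr; exact le_max_left _ _

section

variable {V : Type*} [Fintype V]

theorem hasDerivAt_entropy {p : ℝ → V → ℝ} {q : V → ℝ} {x : ℝ}
    (hp : ∀ v, HasDerivAt (fun η => p η v) (q v) x) (hpos : ∀ v, p x v ≠ 0) :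
    HasDerivAt (fun η => entropy (p η)) (-∑ v, q v * (log (p x v) + 1)) x := by
  refine (HasDerivAt.fun_sum fun v _ => (hp v).mul ((hp v).log (hpos v))).neg.congr_deriv ?_
  congr 1
  refine sum_congr rfl fun v _ => ?_
  field_simp [hpos v]

theorem sum_mul_sub_mul_log_add_one {p : V → ℝ} (hp : ∑ v, p v = 1) (c : V → ℝ) :
    ∑ v, p v * (c v - ∑ u, p u * c u) * (log (p v) + 1) =
      ∑ v, p v * c v * (entropy p + log (p v)) := by
  simp only [entropy, mul_add, mul_sub, sub_mul, mul_one, sum_add_distrib, sum_sub_distrib,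
    ← sum_mul, hp]
  simp only [mul_right_comm _ (∑ u, p u * c u), ← sum_mul]
  ring

variable [DecidableEq V]

theorem softmax_pos (z : V → ℝ) (v : V) : 0 < softmax z v :=
  div_pos (exp_pos _) (sum_pos (fun _ _ => exp_pos _) ⟨v, mem_univ v⟩)

theorem sum_softmax [Nonempty V] (z : V → ℝ) : ∑ v, softmax z v = 1 := by
  simp only [softmax, ← sum_div]
  exact div_self (sum_pos (fun _ _ => exp_pos _) univ_nonempty).ne'

theorem hasDerivAt_softmax {w : ℝ → V → ℝ} {c : V → ℝ} {x : ℝ}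
    (hw : ∀ u, HasDerivAt (fun η => w η u) (c u) x) (v : V) :
    HasDerivAt (fun η => softmax (w η) v)
      (softmax (w x) v * (c v - ∑ u, softmax (w x) u * c u)) x := by
  have hS : ∑ u, exp (w x u) ≠ 0 := (sum_pos (fun u _ => exp_pos _) ⟨v, mem_univ v⟩).ne'
  refine ((hw v).exp.div (HasDerivAt.fun_sum fun u _ => (hw u).exp) hS).congr_deriv ?_
  simp only [softmax, ← sum_div, div_mul_eq_mul_div]
  field_simp

theorem contDiff_entropy_softmax {n : WithTop ℕ∞} {w : ℝ → V → ℝ}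
    (hw : ∀ u, ContDiff ℝ n (fun η => w η u)) :
    ContDiff ℝ n (fun η => entropy (softmax (w η))) := by
  have hsoftmax (v : V) : ContDiff ℝ n (fun η => softmax (w η) v) :=
    ((hw v).exp.div (ContDiff.sum fun u _ => (hw u).exp)
      fun _ => (sum_pos (fun _ _ => exp_pos _) ⟨v, mem_univ v⟩).ne')
  exact (ContDiff.sum fun v _ =>
    (hsoftmax v).mul ((hsoftmax v).log fun _ => (softmax_pos _ v).ne')).neg

theorem hasDerivAt_entropy_softmax_line [Nonempty V] (z c : V → ℝ) :
    HasDerivAt (fun η => entropy (softmax fun v => z v + η * c v))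
      (-∑ v, softmax z v * c v * (entropy (softmax z) + log (softmax z v))) 0 := by
  have hline (u : V) : HasDerivAt (fun η => z u + η * c u) (c u) 0 := by
    simpa using ((hasDerivAt_id 0).mul_const (c u)).const_add (z u)
  have h := hasDerivAt_entropy (fun v => hasDerivAt_softmax hline v) fun v => (softmax_pos _ v).ne'
  simp only [zero_mul, add_zero] at h
  rwa [sum_mul_sub_mul_log_add_one (sum_softmax z)] at h

theorem sum_mul_ite_sub_mul_entropy_add_log (p : V → ℝ) (y : V) (A : ℝ) :
    ∑ v, p v * (A * ((if v = y then 1 else 0) - p v)) * (entropy p + log (p v)) =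
      A * (t1 p y - t2 p) := by
  simp only [t1, t2, mul_sub, sub_mul, mul_ite, mul_one, mul_zero, ite_mul, zero_mul,
    sum_sub_distrib, sum_ite_eq', mem_univ, if_true, mul_sum]
  congr 1
  · ring
  · exact sum_congr rfl fun _ _ => by ring

end

theorem stmt9_general {V : Type*} [Fintype V] [DecidableEq V] (z : V → ℝ) (y : V) (A : ℝ) :
    ∃ C > (0:ℝ), ∃ η₀ > (0:ℝ), ∀ η : ℝ, 0 < η → η < η₀ →
      |entropy (softmax (fun v =>
          z v + η * A * ((if v = y then (1:ℝ) else 0) - softmax z v)))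
        - entropy (softmax z)
        - η * A * (-(t1 (softmax z) y) + t2 (softmax z))| ≤ C * η ^ 2 := by
  have : Nonempty V := ⟨y⟩
  set c : V → ℝ := fun v => A * ((if v = y then 1 else 0) - softmax z v)
  have hf := contDiff_entropy_softmax (n := 2) (w := fun η v => z v + η * c v) fun u => by fun_prop
  obtain ⟨C, hC, η₀, hη₀, h⟩ :=
    hf.exists_abs_sub_sub_mul_le_sq (hasDerivAt_entropy_softmax_line z c)
  refine ⟨C, hC, η₀, hη₀, fun η hη hηη₀ => ?_⟩
  convert h η hη hηη₀ using 3
  · simp only [c, zero_mul, add_zero, mul_assoc]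
  · rw [sum_mul_ite_sub_mul_entropy_add_log]
    ring

theorem stmt9 {V : Type*} [Fintype V] [DecidableEq V] [Nonempty V] (z : V → ℝ) (y : V) (A : ℝ) :
    ∃ C > (0:ℝ), ∃ η₀ > (0:ℝ), ∀ η : ℝ, 0 < η → η < η₀ →
      |entropy (softmax (fun v =>
          z v + η * A * ((if v = y then (1:ℝ) else 0) - softmax z v)))
        - entropy (softmax z)
        - η * A * (-(t1 (softmax z) y) + t2 (softmax z))| ≤ C * η ^ 2 :=
  stmt9_general z y A
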